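/- arXiv:2203.04233 — 3 statements merged into one kernel-verified Lean document; each statement's English description precedes it below -/
import Mathlib

section
/- Let V be a finite-dimensional real inner product space endowed with an r-fold vector cross product χ. Then the constant-curvature operator R^Id satisfies the first CR-integrability condition associated with χ. More precisely, for every orthonormal r-tuple (w₁,…,w_r) in V and all z₁, z₂ ∈ V orthogonal to each of w₂,…,w_r one has ⟨R^Id(w₁,w₂)z₁, z₂⟩ = 0; consequently, for every z ∈ V orthogonal to each of w₂,…,w_r, P(R^Id(w₁,w₂)(χ(w₂,…,w_r,z))) = χ(w₂,…,w_r, P(R^Id(w₁,w₂)z)), where P is the orthogonal projection of V onto the orthogonal complement of span{w₂,…,w_r}. -/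
open RealInnerProductSpace

variable {V : Type*} [NormedAddCommGroup V] [InnerProductSpace ℝ V]

/-- An `r`-fold vector cross product on a real inner product space: an alternating
multilinear map `χ` whose value is orthogonal to each of its arguments and whose
squared norm is the Gram determinant of the arguments. -/
def IsVCP {r : ℕ} (χ : AlternatingMap ℝ V V (Fin r)) : Prop :=
  (∀ v : Fin r → V, ∀ i : Fin r, ⟪χ v, v i⟫ = 0) ∧
  (∀ v : Fin r → V, ⟪χ v, χ v⟫ = (Matrix.of fun i j : Fin r => ⟪v i, v j⟫).det)

/-- An algebraic curvature operator: a bilinear map `V × V → End(V)` that is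
antisymmetric, takes skew-adjoint values, and satisfies the first Bianchi identity. -/
def IsAlgCurvature (R : V →ₗ[ℝ] V →ₗ[ℝ] V →ₗ[ℝ] V) : Prop :=
  (∀ x y, R x y = - R y x) ∧
  (∀ x y z w, ⟪R x y z, w⟫ = - ⟪R x y w, z⟫) ∧
  (∀ x y z, R x y z + R y z x + R z x y = 0)

/-- Orthogonal projection onto the orthogonal complement of the span of `S`. -/
noncomputable def projPerp [FiniteDimensional ℝ V] (S : Set V) (z : V) : V :=
  (Submodule.orthogonalProjectionOnto (Submodule.span ℝ S)ᗮ z : V)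

/-- The constant-curvature operator `R^Id(x,y)z = ⟪y,z⟫ • x - ⟪x,z⟫ • y`. -/
noncomputable def RId : V →ₗ[ℝ] V →ₗ[ℝ] V →ₗ[ℝ] V :=
  LinearMap.mk₂ ℝ
    (fun x y =>
      { toFun := fun z => ⟪y, z⟫ • x - ⟪x, z⟫ • y
        map_add' := fun a b => by simp only [inner_add_right, add_smul]; abel
        map_smul' := fun c a => by
          simp only [inner_smul_right, RingHom.id_apply, smul_sub, smul_smul] })
    (fun x x' y => by ext z; simp [inner_add_left, add_smul]; abel)
    (fun c x y => by ext z; simp [real_inner_smul_left, smul_sub, smul_smul, mul_comm])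
    (fun x y y' => by ext z; simp [inner_add_left, add_smul]; abel)
    (fun c x y => by ext z; simp [real_inner_smul_left, smul_sub, smul_smul, mul_comm])

/-- The first CR-integrability condition for an algebraic curvature operator `R`
with respect to an `(m+2)`-fold VCP `χ`: for every orthonormal `(m+2)`-tuple
`w = (w₁, …, w_r)` and every `z` orthogonal to `w₂, …, w_r`, the orthogonal
projection `P` onto `span{w₂,…,w_r}ᗮ` satisfies
`P (R(w₁,w₂) (χ(w₂,…,w_r,z))) = χ(w₂,…,w_r, P (R(w₁,w₂) z))`. -/
def FirstCR [FiniteDimensional ℝ V] {m : ℕ} (χ : AlternatingMap ℝ V V (Fin (m + 2)))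
    (R : V →ₗ[ℝ] V →ₗ[ℝ] V →ₗ[ℝ] V) : Prop :=
  ∀ w : Fin (m + 2) → V, Orthonormal ℝ w → ∀ z : V,
    (∀ i : Fin (m + 1), ⟪z, Fin.tail w i⟫ = 0) →
    projPerp (Set.range (Fin.tail w)) (R (w 0) (w 1) (χ (Fin.snoc (Fin.tail w) z))) =
      χ (Fin.snoc (Fin.tail w) (projPerp (Set.range (Fin.tail w)) (R (w 0) (w 1) z)))

/-! For `z ⟂ w₂` one has `R^Id(w₁,w₂) z = -⟪w₁,z⟫ w₂`, a multiple of `w₂`. Hence `R^Id(w₁,w₂)`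
maps `w₂ᗮ` into `span{w₂}`, which is orthogonal to `z₂ ⟂ w₂` and killed by `P`. Both sides of the
CR identity therefore vanish: on the left because `χ(w₂,…,w_r,z) ⟂ w₂`, on the right because
`χ(w₂,…,w_r,0) = 0`. -/

lemma RId_apply (x y z : V) : RId x y z = ⟪y, z⟫ • x - ⟪x, z⟫ • y := rfl

lemma RId_apply_of_inner_eq_zero (x : V) {y z : V} (h : ⟪z, y⟫ = 0) :
    RId x y z = (-⟪x, z⟫) • y := by
  rw [RId_apply, real_inner_comm z y, h, zero_smul, zero_sub, neg_smul]

lemma inner_RId_eq_zero (x : V) {y z₁ z₂ : V} (h₁ : ⟪z₁, y⟫ = 0) (h₂ : ⟪z₂, y⟫ = 0) :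
    ⟪RId x y z₁, z₂⟫ = 0 := by
  rw [RId_apply_of_inner_eq_zero x h₁, real_inner_smul_left, real_inner_comm z₂ y, h₂, mul_zero]

lemma projPerp_eq_zero_of_mem [FiniteDimensional ℝ V] {S : Set V} {x : V}
    (hx : x ∈ Submodule.span ℝ S) : projPerp S x = 0 := by
  rw [projPerp, Submodule.orthogonalProjectionOnto_apply_of_mem_orthogonal
    ((Submodule.span ℝ S).le_orthogonal_orthogonal hx), ZeroMemClass.coe_zero]

lemma projPerp_RId_eq_zero [FiniteDimensional ℝ V] {S : Set V} (x : V) {y z : V} (hy : y ∈ S)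
    (hz : ⟪z, y⟫ = 0) : projPerp S (RId x y z) = 0 := by
  rw [RId_apply_of_inner_eq_zero x hz]
  exact projPerp_eq_zero_of_mem (Submodule.smul_mem _ _ (Submodule.subset_span hy))

lemma Fin.snoc_tail_zero {α : Type*} {n : ℕ} (w : Fin (n + 2) → α) (z : α) :
    (Fin.snoc (Fin.tail w) z : Fin (n + 2) → α) 0 = w 1 :=
  Fin.snoc_castSucc (i := 0) ..

/-- The constant-curvature operator `R^Id` satisfies the first CR-integrability
condition associated with any `r`-fold VCP `χ` (here `r = m+2`): for every
orthonormal `r`-tuple `w` and all `z₁, z₂` orthogonal to `w₂,…,w_r` one has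
`⟪R^Id(w₁,w₂) z₁, z₂⟫ = 0`; consequently the projection identity of the first
CR-integrability condition holds for `R^Id`. -/
theorem rId_satisfies_firstCR {V : Type*} [NormedAddCommGroup V] [InnerProductSpace ℝ V]
    [FiniteDimensional ℝ V] {m : ℕ}
    (χ : AlternatingMap ℝ V V (Fin (m + 2))) (hχ : IsVCP χ) :
    (∀ w : Fin (m + 2) → V, Orthonormal ℝ w → ∀ z₁ z₂ : V,
      (∀ i : Fin (m + 1), ⟪z₁, Fin.tail w i⟫ = 0) →
      (∀ i : Fin (m + 1), ⟪z₂, Fin.tail w i⟫ = 0) →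
      ⟪RId (w 0) (w 1) z₁, z₂⟫ = 0) ∧
    FirstCR χ (RId (V := V)) := by
  refine ⟨fun w _ z₁ z₂ hz₁ hz₂ => inner_RId_eq_zero (w 0) (hz₁ 0) (hz₂ 0), ?_⟩
  intro w _ z hz
  have hw₁ : w 1 ∈ Set.range (Fin.tail w) := ⟨0, rfl⟩
  have hχw₁ : ⟪χ (Fin.snoc (Fin.tail w) z), w 1⟫ = 0 := by
    simpa only [Fin.snoc_tail_zero] using hχ.1 (Fin.snoc (Fin.tail w) z) 0
  rw [projPerp_RId_eq_zero (w 0) hw₁ hχw₁, projPerp_RId_eq_zero (w 0) hw₁ (hz 0),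
    χ.map_coord_zero (Fin.last _) (Fin.snoc_last _ _)]
end

section
/- Let V be a 7-dimensional real inner product space endowed with a 2-fold vector cross product χ, and let R be an algebraic curvature operator on V satisfying the first CR-integrability condition associated with χ (i.e., for every orthonormal pair (w₁,w₂) in V and every z ∈ V with z ⊥ w₂ one has P(R(w₁,w₂)(χ(w₂,z))) = χ(w₂, P(R(w₁,w₂)z)), where P is the orthogonal projection of V onto {w₂}^⊥). Then for all x, y ∈ V: R(x,y)z = 0 whenever z is orthogonal to both x and y, and R(x,y) maps span{x,y} into itself (i.e., R(x,y) ∈ 𝔰𝔬(E_{x∧y}) for every x, y). -/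
open RealInnerProductSpace

variable {V : Type*} [NormedAddCommGroup V] [InnerProductSpace ℝ V]

/-!
The first CR-integrability condition says that, for a unit vector `v`, the compression of `R u v`
to `v`'s orthogonal complement commutes with `v ×ᵥ ·`; by bilinearity this holds for all `u, v`,
and it polarizes in `v`. Extend orthonormal `x, y` by a unit `z ⊥ x, y, x ×ᵥ y` (a Cayley triple)
to the frame `x, y, z, x ×ᵥ y, y ×ᵥ z, z ×ᵥ (x ×ᵥ y), x ×ᵥ z`, whose cross products form the
multiplication table of the imaginary octonions. In this frame the polarized commutation relations
are linear relations among the components of `R`, and, up to the index symmetries of `R`, each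
component of `R x y z` and of `R x y (x ×ᵥ y)` is a combination of at most six of them. In
dimension 7 the frame is a basis, so `R x y` kills `{x, y}ᗮ`; being skew-adjoint, it then maps
everything into `span {x, y}`.
-/

theorem inner_self_smul_inv_norm {w : V} (hw : w ≠ 0) : ⟪‖w‖⁻¹ • w, ‖w‖⁻¹ • w⟫ = 1 := by
  have : ‖‖w‖⁻¹ • w‖ = 1 := norm_smul_inv_norm hw
  rw [real_inner_self_eq_norm_sq, this, one_pow]

theorem eq_zero_of_orthonormal_of_card_eq_finrank {ι : Type*} [Fintype ι] [Nonempty ι]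
    {f : ι → V} (hf : Orthonormal ℝ f) (hcard : Fintype.card ι = Module.finrank ℝ V) {v : V}
    (hv : ∀ i, ⟪v, f i⟫ = 0) : v = 0 := by
  have hle : Submodule.span ℝ (Set.range f) ≤ (ℝ ∙ v)ᗮ := Submodule.span_le.2 <| by
    rintro _ ⟨i, rfl⟩
    exact Submodule.mem_orthogonal_singleton_iff_inner_right.2 (hv i)
  rw [hf.linearIndependent.span_eq_top_of_card_eq_finrank hcard] at hle
  exact inner_self_eq_zero.1 (Submodule.mem_orthogonal_singleton_iff_inner_right.1 (hle trivial))

section FiniteDimensional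

variable [FiniteDimensional ℝ V]

theorem exists_unit_orthogonal {n : ℕ} (v : Fin n → V) (hn : n < Module.finrank ℝ V) :
    ∃ w : V, ⟪w, w⟫ = 1 ∧ ∀ i, ⟪v i, w⟫ = 0 := by
  set K := Submodule.span ℝ (Set.range v)
  have hK : Kᗮ ≠ ⊥ := by
    intro hbot
    have h₁ := K.finrank_add_finrank_orthogonal
    have h₂ : Module.finrank ℝ K ≤ n :=
      (finrank_range_le_card (R := ℝ) v).trans_eq (Fintype.card_fin n)
    rw [hbot, finrank_bot] at h₁
    omega
  obtain ⟨w, hwK, hw⟩ := Submodule.exists_mem_ne_zero_of_ne_bot hK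
  refine ⟨‖w‖⁻¹ • w, inner_self_smul_inv_norm hw, fun i => ?_⟩
  rw [real_inner_smul_right, mul_eq_zero]
  exact Or.inr (Submodule.inner_right_of_mem_orthogonal
    (Submodule.subset_span (Set.mem_range_self i)) hwK)

theorem Submodule.apply_mem_of_skew_of_orthogonal (K : Submodule ℝ V) (T : V →ₗ[ℝ] V)
    (hT : ∀ u w, ⟪T u, w⟫ = -⟪T w, u⟫) (hK : ∀ u ∈ Kᗮ, T u = 0) (w : V) : T w ∈ K := by
  rw [← K.orthogonal_orthogonal, Submodule.mem_orthogonal]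
  intro u hu
  rw [real_inner_comm, hT, hK u hu, inner_zero_left, neg_zero]

theorem inner_projPerp_of_mem_orthogonal {S : Set V} (c : V) {w : V}
    (hw : w ∈ (Submodule.span ℝ S)ᗮ) : ⟪projPerp S c, w⟫ = ⟪c, w⟫ :=
  Submodule.inner_orthogonalProjectionOnto_eq_of_mem_right ⟨w, hw⟩ c

end FiniteDimensional

noncomputable def AlternatingMap.cross (χ : AlternatingMap ℝ V V (Fin 2)) : V →ₗ[ℝ] V →ₗ[ℝ] V :=
  LinearMap.mk₂ ℝ (fun u v => χ ![u, v])
    (fun u u' _ => χ.map_vecCons_add _ u u')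
    (fun c u _ => χ.map_vecCons_smul _ c u)
    (fun u v v' => (χ.curryLeft u).map_vecCons_add ![] v v')
    (fun c u v => (χ.curryLeft u).map_vecCons_smul ![] c v)

section CrossProduct

variable {χ : AlternatingMap ℝ V V (Fin 2)}

local notation:70 u:71 " ×ᵥ " v:71 => AlternatingMap.cross χ u v

theorem AlternatingMap.cross_apply (u v : V) : u ×ᵥ v = χ ![u, v] := rfl

theorem AlternatingMap.cross_self (v : V) : v ×ᵥ v = 0 :=
  χ.map_eq_zero_of_eq ![v, v] (i := 0) (j := 1) rfl (by decide)

theorem AlternatingMap.cross_swap (u v : V) : v ×ᵥ u = -(u ×ᵥ v) := by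
  have h := χ.cross_self (u + v)
  simp only [map_add, LinearMap.add_apply, χ.cross_self, zero_add, add_zero] at h
  exact eq_neg_of_add_eq_zero_left h

namespace IsVCP

theorem inner_cross_self_left (hχ : IsVCP χ) (u v : V) : ⟪u ×ᵥ v, u⟫ = 0 := by
  simpa [χ.cross_apply] using hχ.1 ![u, v] 0

theorem inner_cross_self_right (hχ : IsVCP χ) (u v : V) : ⟪u ×ᵥ v, v⟫ = 0 := by
  simpa [χ.cross_apply] using hχ.1 ![u, v] 1

theorem inner_cross_cross_self (hχ : IsVCP χ) (u v : V) :
    ⟪u ×ᵥ v, u ×ᵥ v⟫ = ⟪u, u⟫ * ⟪v, v⟫ - ⟪u, v⟫ ^ 2 := by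
  have h := hχ.2 ![u, v]
  rw [Matrix.det_fin_two] at h
  simp only [Matrix.of_apply, Matrix.cons_val_zero, Matrix.cons_val_one, real_inner_comm u v] at h
  rw [χ.cross_apply, h]
  ring

theorem inner_cross_skew (hχ : IsVCP χ) (u a b : V) : ⟪u ×ᵥ a, b⟫ = -⟪a, u ×ᵥ b⟫ := by
  have h := hχ.inner_cross_self_right u (a + b)
  simp only [map_add, inner_add_left, inner_add_right, hχ.inner_cross_self_right, zero_add,
    add_zero] at h
  linarith [real_inner_comm a (u ×ᵥ b)]

theorem inner_cross_assoc (hχ : IsVCP χ) (a b c : V) : ⟪a, b ×ᵥ c⟫ = ⟪a ×ᵥ b, c⟫ := by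
  rw [real_inner_comm, hχ.inner_cross_skew, χ.cross_swap a b, inner_neg_right, neg_neg,
    real_inner_comm]

theorem inner_cross_cross (hχ : IsVCP χ) (u a b : V) :
    ⟪u ×ᵥ a, u ×ᵥ b⟫ = ⟪u, u⟫ * ⟪a, b⟫ - ⟪u, a⟫ * ⟪u, b⟫ := by
  have h := hχ.inner_cross_cross_self u (a + b)
  simp only [map_add, inner_add_left, inner_add_right, hχ.inner_cross_cross_self,
    real_inner_comm a b, real_inner_comm (u ×ᵥ a) (u ×ᵥ b)] at h
  linarith

theorem cross_cross_self (hχ : IsVCP χ) (u a : V) : u ×ᵥ (u ×ᵥ a) = ⟪u, a⟫ • u - ⟪u, u⟫ • a := by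
  refine ext_inner_right ℝ fun w => ?_
  rw [hχ.inner_cross_skew, hχ.inner_cross_cross]
  simp only [inner_sub_left, real_inner_smul_left]
  ring

theorem cross_cross_add_cross_cross (hχ : IsVCP χ) (u w a : V) :
    u ×ᵥ (w ×ᵥ a) + w ×ᵥ (u ×ᵥ a) = ⟪u, a⟫ • w + ⟪w, a⟫ • u - (2 * ⟪u, w⟫) • a := by
  have h := hχ.cross_cross_self (u + w) a
  simp only [map_add, LinearMap.add_apply, inner_add_left, inner_add_right,
    hχ.cross_cross_self, real_inner_comm u w] at h
  linear_combination (norm := module) h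

theorem cross_cross_add_cross_cross_assoc (hχ : IsVCP χ) (a b c : V) :
    a ×ᵥ (b ×ᵥ c) + (a ×ᵥ b) ×ᵥ c = (2 * ⟪a, c⟫) • b - ⟪b, c⟫ • a - ⟪a, b⟫ • c := by
  have h₁ := hχ.cross_cross_add_cross_cross a b c
  have h₂ := hχ.cross_cross_add_cross_cross b c a
  rw [χ.cross_swap c a, χ.cross_swap a b, χ.cross_swap c (a ×ᵥ b)] at *
  simp only [map_neg, real_inner_comm a c, real_inner_comm b a] at h₁ h₂ ⊢
  linear_combination (norm := module) h₁ + h₂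

theorem cross_line (hχ : IsVCP χ) {a b c : V} (ha : ⟪a, a⟫ = 1) (hb : ⟪b, b⟫ = 1)
    (hab : ⟪a, b⟫ = 0) (hc : a ×ᵥ b = c) :
    b ×ᵥ c = a ∧ c ×ᵥ a = b ∧ b ×ᵥ a = -c ∧ c ×ᵥ b = -a ∧ a ×ᵥ c = -b := by
  have hbc : b ×ᵥ c = a := by
    rw [← hc, χ.cross_swap b a, map_neg, hχ.cross_cross_self, real_inner_comm, hab, hb]
    module
  have hca : c ×ᵥ a = b := by
    rw [← hc, χ.cross_swap a, hχ.cross_cross_self, hab, ha]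
    module
  exact ⟨hbc, hca, by rw [χ.cross_swap a b, hc], by rw [χ.cross_swap b c, hbc],
    by rw [χ.cross_swap c a, hca]⟩

end IsVCP

variable (χ) in
structure IsCayleyTriple (x y z : V) : Prop where
  inner_x : ⟪x, x⟫ = 1
  inner_y : ⟪y, y⟫ = 1
  inner_z : ⟪z, z⟫ = 1
  inner_x_y : ⟪x, y⟫ = 0
  inner_x_z : ⟪x, z⟫ = 0
  inner_y_z : ⟪y, z⟫ = 0
  inner_cross_z : ⟪x ×ᵥ y, z⟫ = 0

variable (χ) in
/-- Indexed so that `eᵢ ×ᵥ eᵢ₊₁ = eᵢ₊₃` (indices mod `7`), the multiplication table of the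
imaginary octonions. -/
noncomputable def cayleyFrame (x y z : V) : Fin 7 → V :=
  ![x, y, z, x ×ᵥ y, y ×ᵥ z, z ×ᵥ (x ×ᵥ y), x ×ᵥ z]

/-- `eᵢ ×ᵥ eᵢ₊d = fanoSign d • eᵢ₊fanoShift d` in a Cayley frame: `fanoShift d = 3d` with sign `+`
for the quadratic residues `d = 1, 2, 4` mod `7`, and `fanoShift d = 5d` with sign `-` otherwise. -/
def fanoShift : Fin 7 → Fin 7 := ![0, 3, 6, 1, 5, 4, 2]

def fanoSign : Fin 7 → ℝ := ![0, 1, 1, -1, 1, -1, -1]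

namespace IsCayleyTriple

variable {x y z : V}

theorem orthonormal (hχ : IsVCP χ) (h : IsCayleyTriple χ x y z) :
    Orthonormal ℝ (cayleyFrame χ x y z) := by
  obtain ⟨hx, hy, hz, hxy, hxz, hyz, hez⟩ := h
  have G := hχ.inner_cross_cross
  have h03 : ⟪x, x ×ᵥ y⟫ = 0 := by rw [real_inner_comm, hχ.inner_cross_self_left]
  have h13 : ⟪y, x ×ᵥ y⟫ = 0 := by rw [real_inner_comm, hχ.inner_cross_self_right]
  have h23 : ⟪z, x ×ᵥ y⟫ = 0 := by rw [real_inner_comm, hez]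
  have h33 : ⟪x ×ᵥ y, x ×ᵥ y⟫ = 1 := by rw [G, hx, hy, hxy]; ring
  have h04 : ⟪x, y ×ᵥ z⟫ = 0 := by rw [hχ.inner_cross_assoc, hez]
  have h05 : ⟪x, z ×ᵥ (x ×ᵥ y)⟫ = 0 := by
    rw [hχ.inner_cross_assoc, G, real_inner_comm y z, hyz, hxz]; ring
  have h15 : ⟪y, z ×ᵥ (x ×ᵥ y)⟫ = 0 := by
    rw [hχ.inner_cross_assoc, χ.cross_swap y x, inner_neg_right, G, real_inner_comm x z, hxz, hyz]
    ring
  have h16 : ⟪y, x ×ᵥ z⟫ = 0 := by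
    rw [hχ.inner_cross_assoc, χ.cross_swap x y, inner_neg_left, hez, neg_zero]
  have h34 : ⟪x ×ᵥ y, y ×ᵥ z⟫ = 0 := by rw [χ.cross_swap y x, inner_neg_left, G, hxz, hyz]; ring
  have h36 : ⟪x ×ᵥ y, x ×ᵥ z⟫ = 0 := by rw [G, hyz, hxy]; ring
  have h44 : ⟪y ×ᵥ z, y ×ᵥ z⟫ = 1 := by rw [G, hy, hz, hyz]; ring
  have h45 : ⟪y ×ᵥ z, z ×ᵥ (x ×ᵥ y)⟫ = 0 := by
    rw [χ.cross_swap z y, inner_neg_left, G, h13, h23]; ring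
  have h46 : ⟪y ×ᵥ z, x ×ᵥ z⟫ = 0 := by
    rw [χ.cross_swap z y, χ.cross_swap z x, inner_neg_left, inner_neg_right, neg_neg, G,
      real_inner_comm x z, real_inner_comm x y, hxz, hxy]
    ring
  have h55 : ⟪z ×ᵥ (x ×ᵥ y), z ×ᵥ (x ×ᵥ y)⟫ = 1 := by rw [G, hz, h33, h23]; ring
  have h56 : ⟪z ×ᵥ (x ×ᵥ y), x ×ᵥ z⟫ = 0 := by
    rw [χ.cross_swap z x, inner_neg_right, G, real_inner_comm x, h03, h23]; ring
  have h66 : ⟪x ×ᵥ z, x ×ᵥ z⟫ = 1 := by rw [G, hx, hz, hxz]; ring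
  rw [orthonormal_iff_ite]
  intro i j
  fin_cases i <;> fin_cases j <;>
    simp only [cayleyFrame, Matrix.cons_val, Fin.reduceFinMk, Fin.reduceEq, ↓reduceIte] <;>
    first
    | assumption
    | exact hχ.inner_cross_self_left _ _
    | exact hχ.inner_cross_self_right _ _
    | (rw [real_inner_comm]; assumption)
    | (rw [real_inner_comm]; exact hχ.inner_cross_self_left _ _)
    | (rw [real_inner_comm]; exact hχ.inner_cross_self_right _ _)

theorem inner_frame (hχ : IsVCP χ) (h : IsCayleyTriple χ x y z) (i j : Fin 7) :
    ⟪cayleyFrame χ x y z i, cayleyFrame χ x y z j⟫ = if i = j then 1 else 0 :=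
  orthonormal_iff_ite.1 (h.orthonormal hχ) i j

theorem cross_frame (hχ : IsVCP χ) (h : IsCayleyTriple χ x y z) (i j : Fin 7) :
    cayleyFrame χ x y z i ×ᵥ cayleyFrame χ x y z j =
      fanoSign (j - i) • cayleyFrame χ x y z (i + fanoShift (j - i)) := by
  have o := h.inner_frame hχ
  have o₀₄ : ⟪x, y ×ᵥ z⟫ = 0 := o 0 4
  have o₁₄ : ⟪y, y ×ᵥ z⟫ = 0 := o 1 4
  have o₁₅ : ⟪y, z ×ᵥ (x ×ᵥ y)⟫ = 0 := o 1 5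
  have o₂₃ : ⟪z, x ×ᵥ y⟫ = 0 := o 2 3
  have o₂₅ : ⟪z, z ×ᵥ (x ×ᵥ y)⟫ = 0 := o 2 5
  have o₂₆ : ⟪z, x ×ᵥ z⟫ = 0 := o 2 6
  have o₃₃ : ⟪x ×ᵥ y, x ×ᵥ y⟫ = 1 := o 3 3
  have o₃₄ : ⟪x ×ᵥ y, y ×ᵥ z⟫ = 0 := o 3 4
  have o₃₆ : ⟪x ×ᵥ y, x ×ᵥ z⟫ = 0 := o 3 6
  have o₄₄ : ⟪y ×ᵥ z, y ×ᵥ z⟫ = 1 := o 4 4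
  have o₄₅ : ⟪y ×ᵥ z, z ×ᵥ (x ×ᵥ y)⟫ = 0 := o 4 5
  have o₅₅ : ⟪z ×ᵥ (x ×ᵥ y), z ×ᵥ (x ×ᵥ y)⟫ = 1 := o 5 5
  have o₅₆ : ⟪z ×ᵥ (x ×ᵥ y), x ×ᵥ z⟫ = 0 := o 5 6
  have o₆₆ : ⟪x ×ᵥ z, x ×ᵥ z⟫ = 1 := o 6 6
  have A := hχ.cross_cross_add_cross_cross_assoc
  -- `lᵢ` lists the products along the line `{eᵢ, eᵢ₊₁, eᵢ₊₃}`; for `i = 3, 4, 5` the product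
  -- `eᵢ ×ᵥ eᵢ₊₁ = eᵢ₊₃` is not a definition but follows from `A`.
  have l₀ := hχ.cross_line h.inner_x h.inner_y h.inner_x_y rfl
  have l₁ := hχ.cross_line h.inner_y h.inner_z h.inner_y_z rfl
  have l₂ := hχ.cross_line h.inner_z o₃₃ o₂₃ rfl
  have l₆ := hχ.cross_line h.inner_x h.inner_z h.inner_x_z rfl
  have d₃ : (x ×ᵥ y) ×ᵥ (y ×ᵥ z) = x ×ᵥ z := by
    have := A x y (y ×ᵥ z)
    rw [l₁.2.2.2.2, map_neg, o₀₄, o₁₄, h.inner_x_y] at this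
    linear_combination (norm := module) this
  have l₃ := hχ.cross_line o₃₃ o₄₄ o₃₄ d₃
  have d₄ : (y ×ᵥ z) ×ᵥ (z ×ᵥ (x ×ᵥ y)) = x := by
    have := A y z (z ×ᵥ (x ×ᵥ y))
    rw [l₂.2.2.2.2, o₁₅, o₂₅, h.inner_y_z, map_neg, l₀.1] at this
    linear_combination (norm := module) this
  have l₄ := hχ.cross_line o₄₄ o₅₅ o₄₅ d₄
  have d₅ : (z ×ᵥ (x ×ᵥ y)) ×ᵥ (x ×ᵥ z) = y := by
    have := A z (x ×ᵥ y) (x ×ᵥ z)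
    rw [l₃.2.2.2.2, map_neg, l₁.1, o₂₆, o₃₆, o₂₃] at this
    linear_combination (norm := module) this
  have l₅ := hχ.cross_line o₅₅ o₆₆ o₅₆ d₅
  fin_cases i <;> fin_cases j <;>
    simp [cayleyFrame, fanoSign, fanoShift, χ.cross_self, l₀, l₁, l₂, l₃, l₄, l₅, l₆, d₃, d₄, d₅]

end IsCayleyTriple

section Curvature

variable {R : V →ₗ[ℝ] V →ₗ[ℝ] V →ₗ[ℝ] V}

theorem IsAlgCurvature.apply_self (hR : IsAlgCurvature R) (v : V) : R v v = 0 := by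
  have h := hR.1 v v
  rwa [eq_neg_iff_add_eq_zero, ← two_smul ℝ, smul_eq_zero, or_iff_right two_ne_zero] at h

theorem IsAlgCurvature.inner_apply_swap (hR : IsAlgCurvature R) (a b c d : V) :
    ⟪R a b c, d⟫ = ⟪R c d a, b⟫ := by
  have A : ∀ a b c d : V, ⟪R a b c, d⟫ = -⟪R b a c, d⟫ := fun a b c d => by
    rw [hR.1 a b, LinearMap.neg_apply, inner_neg_left]
  have K := hR.2.1
  have B : ∀ a b c d : V, ⟪R a b c, d⟫ + ⟪R b c a, d⟫ + ⟪R c a b, d⟫ = 0 := fun a b c d => by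
    rw [← inner_add_left, ← inner_add_left, hR.2.2, inner_zero_left]
  linarith [K c a b d, K b c a d, K a b c d, K a d b c, K d b a c, A a b d c, B d c a b,
    A d c a b, B b c d a, B c a b d, K c d b a, B b a d c]

def frameCoeff {ι : Type*} (R : V →ₗ[ℝ] V →ₗ[ℝ] V →ₗ[ℝ] V) (f : ι → V) (i j k l : ι) : ℝ :=
  ⟪R (f i) (f j) (f k), f l⟫

/-- Every component of `R` is its own average over the eight index symmetries; rewriting
components into this form lets `ring` see those symmetries. -/
theorem IsAlgCurvature.frameCoeff_eq_average {ι : Type*} (hR : IsAlgCurvature R) (f : ι → V)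
    (i j k l : ι) :
    frameCoeff R f i j k l = (⟪R (f i) (f j) (f k), f l⟫ - ⟪R (f j) (f i) (f k), f l⟫
      - ⟪R (f i) (f j) (f l), f k⟫ + ⟪R (f j) (f i) (f l), f k⟫ + ⟪R (f k) (f l) (f i), f j⟫
      - ⟪R (f l) (f k) (f i), f j⟫ - ⟪R (f k) (f l) (f j), f i⟫
      + ⟪R (f l) (f k) (f j), f i⟫) / 8 := by
  have A : ∀ a b c d : V, ⟪R b a c, d⟫ = -⟪R a b c, d⟫ := fun a b c d => by
    rw [hR.1 b a, LinearMap.neg_apply, inner_neg_left]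
  rw [frameCoeff, A (f i), A (f i) _ (f l), A (f k), A (f k) _ (f j), hR.2.1 _ _ (f l),
    hR.2.1 _ _ (f j), hR.inner_apply_swap (f k)]
  ring

variable (χ R) in
/-- Since `v ×ᵥ ·` is skew-adjoint, the sum equals `⟪[R u v, v ×ᵥ ·] a, b⟫`: the compression of
`R u v` to the orthogonal complement of `v` commutes with `v ×ᵥ ·`. -/
def CommutesWithCross : Prop :=
  ∀ u v a b : V, ⟪a, v⟫ = 0 → ⟪b, v⟫ = 0 → ⟪R u v (v ×ᵥ a), b⟫ + ⟪R u v a, v ×ᵥ b⟫ = 0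

theorem CommutesWithCross.polarization (hJ : CommutesWithCross χ R) {u v w a b : V}
    (hav : ⟪a, v⟫ = 0) (haw : ⟪a, w⟫ = 0) (hbv : ⟪b, v⟫ = 0) (hbw : ⟪b, w⟫ = 0) :
    ⟪R u v (w ×ᵥ a), b⟫ + ⟪R u v a, w ×ᵥ b⟫ + ⟪R u w (v ×ᵥ a), b⟫ + ⟪R u w a, v ×ᵥ b⟫ = 0 := by
  have h := hJ u (v + w) a b (by rw [inner_add_right, hav, haw, add_zero])
    (by rw [inner_add_right, hbv, hbw, add_zero])
  simp only [map_add, LinearMap.add_apply, inner_add_left, inner_add_right] at h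
  linear_combination h - hJ u v a b hav hbv - hJ u w a b haw hbw

section CayleyFrame

variable {x y z : V}

theorem IsCayleyTriple.polarization_frame (hχ : IsVCP χ) (hJ : CommutesWithCross χ R)
    (h : IsCayleyTriple χ x y z) :
    ∀ (u v w a b : Fin 7) (_ : a ≠ v := by decide) (_ : a ≠ w := by decide)
      (_ : b ≠ v := by decide) (_ : b ≠ w := by decide),
    fanoSign (a - w) * frameCoeff R (cayleyFrame χ x y z) u v (w + fanoShift (a - w)) b
      + fanoSign (b - w) * frameCoeff R (cayleyFrame χ x y z) u v a (w + fanoShift (b - w))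
      + fanoSign (a - v) * frameCoeff R (cayleyFrame χ x y z) u w (v + fanoShift (a - v)) b
      + fanoSign (b - v) * frameCoeff R (cayleyFrame χ x y z) u w a (v + fanoShift (b - v))
      = 0 := by
  intro u v w a b hav haw hbv hbw
  have o := h.inner_frame hχ
  have := hJ.polarization (u := cayleyFrame χ x y z u) (by rw [o, if_neg hav])
    (by rw [o, if_neg haw]) (by rw [o, if_neg hbv]) (by rw [o, if_neg hbw])
  simp only [h.cross_frame hχ, map_smul, inner_smul_left, inner_smul_right,
    RCLike.conj_to_real] at this
  simp only [frameCoeff]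
  linear_combination this

-- The coefficients of the combinations of relations `P u v w a b` below were found by solving
-- the linear system that these relations impose on the frame components of `R`.
theorem IsCayleyTriple.apply_eq_zero (h7 : Module.finrank ℝ V = 7) (hχ : IsVCP χ)
    (hR : IsAlgCurvature R) (hJ : CommutesWithCross χ R) (h : IsCayleyTriple χ x y z) :
    R x y z = 0 := by
  refine eq_zero_of_orthonormal_of_card_eq_finrank (h.orthonormal hχ) (by simp [h7]) fun k => ?_
  change frameCoeff R (cayleyFrame χ x y z) 0 1 2 k = 0
  have P := @IsCayleyTriple.polarization_frame (hχ := hχ) (hJ := hJ) (h := h)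
  fin_cases k <;>
    [linear_combination (norm := skip) 1/2 * P 5 2 5 0 3 + 1/4 * P 2 0 0 5 6 - 1/4 * P 3 4 4 1 5
      + 1/4 * P 0 1 1 0 4 - 1/2 * P 0 2 5 0 6;
     linear_combination (norm := skip) -1/2 * P 1 2 5 1 4 - 1/4 * P 3 6 6 1 2 - 1/4 * P 2 1 1 2 6
      - 1/4 * P 1 0 0 1 6 - 1/2 * P 2 0 5 1 6;
     linear_combination (norm := skip);
     linear_combination (norm := skip) 1/2 * P 2 3 5 0 6 - 1/4 * P 1 6 6 0 5 - 1/2 * P 1 0 4 2 6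
      + 1/4 * P 3 2 2 0 4 + 1/4 * P 0 1 1 0 2 + 1/4 * P 0 4 4 0 2;
     linear_combination (norm := skip) 1/2 * P 4 2 4 1 5 + 1/4 * P 5 2 2 3 6 - 1/4 * P 2 5 5 3 4
      + 1/4 * P 5 6 6 0 5 - 1/4 * P 1 0 0 4 6;
     linear_combination (norm := skip) -1/4 * P 1 0 0 5 6 + 1/4 * P 2 5 5 1 4 - 1/4 * P 4 6 6 0 5;
     linear_combination (norm := skip) 1/2 * P 0 1 3 5 6 - 1/4 * P 5 2 2 1 5 - 1/2 * P 2 4 5 2 3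
      - 1/4 * P 2 6 6 0 5 - 1/4 * P 5 4 4 0 2]
  all_goals
    simp only [fanoSign, fanoShift, Fin.reduceSub, Fin.reduceAdd, Fin.reduceFinMk, Fin.isValue,
      Matrix.cons_val, hR.frameCoeff_eq_average]
    ring1

theorem IsCayleyTriple.apply_cross_eq_zero (h7 : Module.finrank ℝ V = 7) (hχ : IsVCP χ)
    (hR : IsAlgCurvature R) (hJ : CommutesWithCross χ R) (h : IsCayleyTriple χ x y z) :
    R x y (x ×ᵥ y) = 0 := by
  refine eq_zero_of_orthonormal_of_card_eq_finrank (h.orthonormal hχ) (by simp [h7]) fun k => ?_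
  change frameCoeff R (cayleyFrame χ x y z) 0 1 3 k = 0
  have P := @IsCayleyTriple.polarization_frame (hχ := hχ) (hJ := hJ) (h := h)
  fin_cases k <;>
    [linear_combination (norm := skip) 1/2 * P 1 3 5 1 6 - 1/4 * P 1 4 4 2 5 + 1/2 * P 0 1 3 4 5
      + 1/2 * P 0 3 6 0 5 + 1/2 * P 0 2 3 1 6 + 1/2 * P 1 0 3 4 5;
     linear_combination (norm := skip) 1/2 * P 1 0 5 1 2 - 1/2 * P 1 0 6 1 4 - 1/4 * P 3 4 4 2 6
      + 1/4 * P 3 1 1 4 5 - 1/2 * P 1 0 3 5 6 - 1/4 * P 3 2 2 1 3;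
     linear_combination (norm := skip) -1/2 * P 2 3 5 0 6 + 1/4 * P 1 6 6 0 5 + 1/2 * P 1 0 4 2 6
      - 1/4 * P 3 2 2 0 4 - 1/4 * P 0 1 1 0 2 - 1/4 * P 0 4 4 0 2;
     linear_combination (norm := skip);
     linear_combination (norm := skip) 1/2 * P 5 0 1 2 4 - 1/4 * P 1 5 5 0 6 - 1/2 * P 1 0 2 1 3
      - 1/4 * P 3 4 4 1 5 - 1/2 * P 5 0 2 1 4;
     linear_combination (norm := skip) -1/4 * P 1 0 0 3 4 - 1/2 * P 6 0 6 1 2 + 1/2 * P 5 2 5 4 6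
      - 1/4 * P 0 1 1 0 5 + 1/2 * P 4 1 4 0 2;
     linear_combination (norm := skip) -1/2 * P 0 2 5 0 4 - 1/2 * P 3 4 6 0 2 - 1/4 * P 5 2 2 0 3
      + 1/4 * P 5 0 0 2 4 - 1/4 * P 0 1 1 0 6]
  all_goals
    simp only [fanoSign, fanoShift, Fin.reduceSub, Fin.reduceAdd, Fin.reduceFinMk, Fin.isValue,
      Matrix.cons_val, hR.frameCoeff_eq_average]
    ring1

end CayleyFrame

section FiniteDimensional

variable [FiniteDimensional ℝ V]

theorem FirstCR.inner_cross_of_orthonormal (hχ : IsVCP χ) (hCR : FirstCR (m := 0) χ R)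
    {u v a b : V} (hu : ‖u‖ = 1) (hv : ‖v‖ = 1) (huv : ⟪u, v⟫ = 0) (ha : ⟪a, v⟫ = 0)
    (hb : ⟪b, v⟫ = 0) : ⟪R u v (v ×ᵥ a), b⟫ + ⟪R u v a, v ×ᵥ b⟫ = 0 := by
  have h := hCR ![u, v] (by simp [hu, hv, huv]) a (by simpa using ha)
  simp only [Fin.tail_vecCons, Matrix.range_cons, Matrix.range_empty, Set.union_empty,
    Matrix.cons_val_zero, Matrix.cons_val_one, Matrix.cons_val_fin_one, Matrix.Fin.snoc_vecCons,
    Matrix.Fin.snoc_vecEmpty, ← χ.cross_apply] at h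
  have hperp : ∀ {w}, ⟪w, v⟫ = 0 → w ∈ (Submodule.span ℝ {v})ᗮ := fun hw =>
    Submodule.mem_orthogonal_singleton_iff_inner_right.2 (by rwa [real_inner_comm])
  rw [← inner_projPerp_of_mem_orthogonal _ (hperp hb), h, hχ.inner_cross_skew,
    inner_projPerp_of_mem_orthogonal _ (hperp (hχ.inner_cross_self_left v b)), neg_add_cancel]

theorem FirstCR.commutesWithCross (hχ : IsVCP χ) (hR : IsAlgCurvature R)
    (hCR : FirstCR (m := 0) χ R) : CommutesWithCross χ R := by
  have of_unit : ∀ {u v a b : V}, ‖v‖ = 1 → ⟪u, v⟫ = 0 → ⟪a, v⟫ = 0 → ⟪b, v⟫ = 0 →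
      ⟪R u v (v ×ᵥ a), b⟫ + ⟪R u v a, v ×ᵥ b⟫ = 0 := by
    intro u v a b hv huv ha hb
    rcases eq_or_ne u 0 with rfl | hu
    · simp
    have := hCR.inner_cross_of_orthonormal hχ (norm_smul_inv_norm hu) hv
      (by rw [real_inner_smul_left, huv, mul_zero]) ha hb
    simp only [map_smul, LinearMap.smul_apply, real_inner_smul_left, ← mul_add] at this
    exact (mul_eq_zero.1 this).resolve_left (inv_ne_zero (norm_ne_zero_iff.2 hu))
  intro u v a b ha hb
  rcases eq_or_ne v 0 with rfl | hv
  · simp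
  set v₁ := ‖v‖⁻¹ • v
  have hv₁ : ‖v₁‖ = 1 := norm_smul_inv_norm hv
  have := of_unit (u := u - ⟪u, v₁⟫ • v₁) (a := a) (b := b) hv₁
    (by rw [inner_sub_left, real_inner_smul_left, real_inner_self_eq_norm_sq, hv₁]; ring)
    (by rw [real_inner_smul_right, ha, mul_zero]) (by rw [real_inner_smul_right, hb, mul_zero])
  simp only [v₁, map_sub, map_smul, LinearMap.sub_apply, LinearMap.smul_apply, hR.apply_self,
    smul_zero, sub_zero, real_inner_smul_left, real_inner_smul_right, ← mul_add] at this
  simpa [hv] using this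

theorem IsAlgCurvature.apply_eq_zero_of_orthonormal (h7 : Module.finrank ℝ V = 7)
    (hχ : IsVCP χ) (hR : IsAlgCurvature R) (hJ : CommutesWithCross χ R) {x y z : V}
    (hx : ⟪x, x⟫ = 1) (hy : ⟪y, y⟫ = 1) (hxy : ⟪x, y⟫ = 0) (hxz : ⟪x, z⟫ = 0)
    (hyz : ⟪y, z⟫ = 0) : R x y z = 0 := by
  have cayley : ∀ {w : V}, w ≠ 0 → ⟪x, w⟫ = 0 → ⟪y, w⟫ = 0 → ⟪x ×ᵥ y, w⟫ = 0 →
      IsCayleyTriple χ x y (‖w‖⁻¹ • w) := fun {w} hw hxw hyw hew =>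
    ⟨hx, hy, inner_self_smul_inv_norm hw, hxy, by rw [real_inner_smul_right, hxw, mul_zero],
      by rw [real_inner_smul_right, hyw, mul_zero], by rw [real_inner_smul_right, hew, mul_zero]⟩
  obtain ⟨w, hw, hwo⟩ := exists_unit_orthogonal ![x, y, x ×ᵥ y] (by omega)
  have he : R x y (x ×ᵥ y) = 0 :=
    IsCayleyTriple.apply_cross_eq_zero (z := w) h7 hχ hR hJ ⟨hx, hy, hw, hxy, hwo 0, hwo 1, hwo 2⟩
  have hxe : ⟪x, x ×ᵥ y⟫ = 0 := by rw [real_inner_comm, hχ.inner_cross_self_left]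
  have hye : ⟪y, x ×ᵥ y⟫ = 0 := by rw [real_inner_comm, hχ.inner_cross_self_right]
  have hee : ⟪x ×ᵥ y, x ×ᵥ y⟫ = 1 := by rw [hχ.inner_cross_cross_self, hx, hy, hxy]; ring
  set z' := z - ⟪x ×ᵥ y, z⟫ • (x ×ᵥ y)
  have hz' : R x y z' = 0 := by
    rcases eq_or_ne z' 0 with h0 | h0
    · rw [h0, map_zero]
    have := (cayley h0 (by rw [inner_sub_right, real_inner_smul_right, hxz, hxe]; ring)
      (by rw [inner_sub_right, real_inner_smul_right, hyz, hye]; ring)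
      (by rw [inner_sub_right, real_inner_smul_right, hee]; ring)).apply_eq_zero h7 hχ hR hJ
    rwa [map_smul, smul_eq_zero, or_iff_right (inv_ne_zero (norm_ne_zero_iff.2 h0))] at this
  have hz : z = z' + ⟪x ×ᵥ y, z⟫ • (x ×ᵥ y) := (sub_add_cancel _ _).symm
  rw [hz, map_add, map_smul, hz', he, smul_zero, add_zero]

theorem IsAlgCurvature.apply_eq_zero_of_orthogonal (h7 : Module.finrank ℝ V = 7)
    (hχ : IsVCP χ) (hR : IsAlgCurvature R) (hJ : CommutesWithCross χ R) {x y z : V}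
    (hzx : ⟪z, x⟫ = 0) (hzy : ⟪z, y⟫ = 0) : R x y z = 0 := by
  rcases eq_or_ne x 0 with rfl | hx
  · simp
  set x₁ := ‖x‖⁻¹ • x
  set y' := y - ⟪x₁, y⟫ • x₁
  have hRy : R x y = R x y' := by simp [y', x₁, hR.apply_self]
  rw [hRy]
  rcases eq_or_ne y' 0 with h0 | h0
  · rw [h0, map_zero, LinearMap.zero_apply]
  have hx₁ : ⟪x₁, x₁⟫ = 1 := inner_self_smul_inv_norm hx
  have hx₁z : ⟪x₁, z⟫ = 0 := by rw [real_inner_smul_left, real_inner_comm, hzx, mul_zero]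
  have hy'z : ⟪y', z⟫ = 0 := by
    rw [inner_sub_left, real_inner_smul_left, hx₁z, real_inner_comm, hzy]; ring
  have := hR.apply_eq_zero_of_orthonormal h7 hχ hJ hx₁ (inner_self_smul_inv_norm h0)
    (by rw [real_inner_smul_right, inner_sub_right, real_inner_smul_right, hx₁]; ring) hx₁z
    (by rw [real_inner_smul_left, hy'z, mul_zero])
  simpa [x₁, hx, h0] using this

end FiniteDimensional

end Curvature

end CrossProduct

/-- On a 7-dimensional real inner product space with a 2-fold VCP `χ`, an algebraic
curvature operator satisfying the first CR-integrability condition kills every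
vector orthogonal to its two arguments, and maps `span{x,y}` into itself. -/
theorem dim7_firstCR_curvature_in_so_E {V : Type*} [NormedAddCommGroup V]
    [InnerProductSpace ℝ V] [FiniteDimensional ℝ V] (h7 : Module.finrank ℝ V = 7)
    (χ : AlternatingMap ℝ V V (Fin 2)) (hχ : IsVCP χ)
    (R : V →ₗ[ℝ] V →ₗ[ℝ] V →ₗ[ℝ] V) (hR : IsAlgCurvature R)
    (hCR : FirstCR (m := 0) χ R) :
    (∀ x y z : V, ⟪z, x⟫ = 0 → ⟪z, y⟫ = 0 → R x y z = 0) ∧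
    (∀ x y : V, ∀ w ∈ Submodule.span ℝ ({x, y} : Set V),
      R x y w ∈ Submodule.span ℝ ({x, y} : Set V)) := by
  have hJ := hCR.commutesWithCross hχ hR
  have hzero : ∀ x y z : V, ⟪z, x⟫ = 0 → ⟪z, y⟫ = 0 → R x y z = 0 := fun _ _ _ hzx hzy =>
    hR.apply_eq_zero_of_orthogonal h7 hχ hJ hzx hzy
  refine ⟨hzero, fun x y w _ => ?_⟩
  refine (Submodule.span ℝ {x, y}).apply_mem_of_skew_of_orthogonal (R x y) (hR.2.1 x y)
    (fun u hu => hzero x y u ?_ ?_) w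
  · exact Submodule.inner_left_of_mem_orthogonal (Submodule.subset_span (by simp)) hu
  · exact Submodule.inner_left_of_mem_orthogonal (Submodule.subset_span (by simp)) hu
end

section
/- Let V be an 8-dimensional real inner product space endowed with a 3-fold vector cross product χ, and let ξ ∈ V be a unit vector. Set W = ξ^⊥ and define χ_ξ : W × W → W by χ_ξ(x,y) := χ(ξ,x,y). Then: (a) χ_ξ is a 2-fold vector cross product on the 7-dimensional inner product space W; (b) for every A ∈ 𝒲(V), the map A|_W defined by A|_W(η₁; η₂,η₃,η₄) := A(η₁; ξ, η₂, η₃, η₄) for η₁,η₂,η₃,η₄ ∈ W is an algebraic intrinsic torsion on (W, χ_ξ); and (c) if A satisfies the second CR-integrability condition on (V,χ), then A|_W satisfies the second CR-integrability condition on (W, χ_ξ). -/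
open RealInnerProductSpace

variable {V : Type*} [NormedAddCommGroup V] [InnerProductSpace ℝ V]

/-- Given a 2-fold VCP `χ`, a unit vector `v` and a Hermitian frame `w = (w₁,w₂,w₃)`
for `v`, the extended frame `(w₁,w₂,w₃, χ(v,w₁), χ(v,w₂), χ(v,w₃))`. -/
def hermExt (χ : AlternatingMap ℝ V V (Fin 2)) (v : V) (w : Fin 3 → V) : Fin 6 → V :=
  Fin.append w fun k => χ ![v, w k]

/-- The second CR-integrability condition for an algebraic intrinsic torsion `A` on a
7-dimensional space with a 2-fold VCP `χ`: for every unit vector `v`, every Hermitian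
frame `(w₁,w₂,w₃)` for `v` (pairwise orthogonal unit vectors, orthogonal to `v`, with
`⟪wᵢ, χ(v,wⱼ)⟫ = 0`), extended by `w_{3+k} := χ(v,w_k)`, and all `j,p,q ∈ {1,…,6}`,
`A(χ(v,w_q); v,w_j,w_p) - A(χ(v,w_p); v,w_j,w_q)
  + A(w_q; v,χ(v,w_j),w_p) - A(w_p; v,χ(v,w_j),w_q) = 0`. -/
def SecondCR7 (χ : AlternatingMap ℝ V V (Fin 2))
    (A : V →ₗ[ℝ] AlternatingMap ℝ V ℝ (Fin 3)) : Prop :=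
  ∀ v : V, ‖v‖ = 1 → ∀ w : Fin 3 → V, Orthonormal ℝ w →
    (∀ i, ⟪w i, v⟫ = 0) → (∀ i j, ⟪w i, χ ![v, w j]⟫ = 0) →
    ∀ j p q : Fin 6,
      A (χ ![v, hermExt χ v w q]) ![v, hermExt χ v w j, hermExt χ v w p]
        - A (χ ![v, hermExt χ v w p]) ![v, hermExt χ v w j, hermExt χ v w q]
        + A (hermExt χ v w q) ![v, χ ![v, hermExt χ v w j], hermExt χ v w p]
        - A (hermExt χ v w p) ![v, χ ![v, hermExt χ v w j], hermExt χ v w q] = 0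

/-- Given a 3-fold VCP `χ`, an orthonormal pair `(v₁,v₂)` and a Hermitian frame
`w = (w₁,w₂,w₃)` for `(v₁,v₂)`, the extended frame
`(w₁,w₂,w₃, χ(v₁,v₂,w₁), χ(v₁,v₂,w₂), χ(v₁,v₂,w₃))`. -/
def hermExt8 (χ : AlternatingMap ℝ V V (Fin 3)) (v₁ v₂ : V) (w : Fin 3 → V) : Fin 6 → V :=
  Fin.append w fun k => χ ![v₁, v₂, w k]

/-- The second CR-integrability condition for an element `A` of `𝒲(V)` on an
8-dimensional space with a 3-fold VCP `χ`: for every orthonormal pair `(v₁,v₂)`,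
every Hermitian frame `(w₁,w₂,w₃)` for `(v₁,v₂)` (pairwise orthogonal unit vectors,
orthogonal to `v₁` and `v₂`, with `⟪wᵢ, χ(v₁,v₂,wⱼ)⟫ = 0`), extended by
`w_{3+k} := χ(v₁,v₂,w_k)`, and all `j,p,q ∈ {1,…,6}`,
`A(χ(v₁,v₂,w_q); v₁,v₂,w_j,w_p) - A(χ(v₁,v₂,w_p); v₁,v₂,w_j,w_q)
  + A(w_q; v₁,v₂,χ(v₁,v₂,w_j),w_p) - A(w_p; v₁,v₂,χ(v₁,v₂,w_j),w_q) = 0`. -/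
def SecondCR8 (χ : AlternatingMap ℝ V V (Fin 3))
    (A : V →ₗ[ℝ] AlternatingMap ℝ V ℝ (Fin 4)) : Prop :=
  ∀ v₁ v₂ : V, ‖v₁‖ = 1 → ‖v₂‖ = 1 → ⟪v₁, v₂⟫ = 0 →
    ∀ w : Fin 3 → V, Orthonormal ℝ w →
    (∀ i, ⟪w i, v₁⟫ = 0) → (∀ i, ⟪w i, v₂⟫ = 0) →
    (∀ i j, ⟪w i, χ ![v₁, v₂, w j]⟫ = 0) →
    ∀ j p q : Fin 6,
      A (χ ![v₁, v₂, hermExt8 χ v₁ v₂ w q])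
          ![v₁, v₂, hermExt8 χ v₁ v₂ w j, hermExt8 χ v₁ v₂ w p]
        - A (χ ![v₁, v₂, hermExt8 χ v₁ v₂ w p])
          ![v₁, v₂, hermExt8 χ v₁ v₂ w j, hermExt8 χ v₁ v₂ w q]
        + A (hermExt8 χ v₁ v₂ w q)
          ![v₁, v₂, χ ![v₁, v₂, hermExt8 χ v₁ v₂ w j], hermExt8 χ v₁ v₂ w p]
        - A (hermExt8 χ v₁ v₂ w p)
          ![v₁, v₂, χ ![v₁, v₂, hermExt8 χ v₁ v₂ w j], hermExt8 χ v₁ v₂ w q] = 0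

/-!
Since `χ(ξ, x, y)` is orthogonal to `ξ`, contracting `χ` with `ξ` maps `ξᗮ × ξᗮ` into `ξᗮ`.
The Gram matrix of `(ξ, x, y)` has first row `(1, 0, 0)`, so its determinant is that of
`(x, y)`, and the contraction is a 2-fold VCP. The torsion identity of the restriction is that
of `A` with `η₂ = ξ`, and its CR condition is that of `A` with `v₁ = ξ`: a Hermitian frame for
`v ∈ ξᗮ` with respect to `χ_ξ` is a Hermitian frame for the pair `(ξ, v)` with the same
extended frame.
-/

theorem det_gram_vecCons_of_orthogonal {r : ℕ} {ξ : V} (hξ : ‖ξ‖ = 1) (v : Fin r → V)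
    (hv : ∀ i, ⟪ξ, v i⟫ = 0) :
    (Matrix.of fun i j : Fin (r + 1) => ⟪Matrix.vecCons ξ v i, Matrix.vecCons ξ v j⟫).det =
      (Matrix.of fun i j : Fin r => ⟪v i, v j⟫).det := by
  rw [Matrix.det_succ_row_zero, Fin.sum_univ_succ]
  simp [hv, hξ, Matrix.submatrix]

namespace AlternatingMap

variable {r : ℕ} {χ : AlternatingMap ℝ V V (Fin (r + 1))}

theorem apply_vecCons_mem_orthogonal (hχ : ∀ v i, ⟪χ v, v i⟫ = 0) (ξ : V) (v : Fin r → V) :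
    χ (Matrix.vecCons ξ v) ∈ (ℝ ∙ ξ)ᗮ :=
  Submodule.mem_orthogonal_singleton_iff_inner_right.mpr <| by
    rw [real_inner_comm]; exact hχ _ 0

noncomputable def curryLeftPerp (χ : AlternatingMap ℝ V V (Fin (r + 1)))
    (hχ : ∀ v i, ⟪χ v, v i⟫ = 0) (ξ : V) : AlternatingMap ℝ (ℝ ∙ ξ)ᗮ (ℝ ∙ ξ)ᗮ (Fin r) :=
  ((χ.curryLeft ξ).compLinearMap (ℝ ∙ ξ)ᗮ.subtype).codRestrict _ fun _ =>
    apply_vecCons_mem_orthogonal hχ ξ _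

theorem coe_curryLeftPerp_apply (hχ : ∀ v i, ⟪χ v, v i⟫ = 0) (ξ : V) (v : Fin r → (ℝ ∙ ξ)ᗮ) :
    (χ.curryLeftPerp hχ ξ v : V) = χ (Matrix.vecCons ξ ((↑) ∘ v)) :=
  rfl

theorem coe_curryLeftPerp_apply_two {χ : AlternatingMap ℝ V V (Fin 3)}
    (hχ : ∀ v i, ⟪χ v, v i⟫ = 0) (ξ : V) (x y : (ℝ ∙ ξ)ᗮ) :
    (χ.curryLeftPerp hχ ξ ![x, y] : V) = χ ![ξ, x, y] := by
  rw [coe_curryLeftPerp_apply, ← FinVec.map_eq]; rfl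

theorem isVCP_curryLeftPerp (hχ : IsVCP χ) {ξ : V} (hξ : ‖ξ‖ = 1) :
    IsVCP (χ.curryLeftPerp hχ.1 ξ) := by
  have hperp (v : Fin r → (ℝ ∙ ξ)ᗮ) (i : Fin r) : ⟪ξ, (v i : V)⟫ = 0 :=
    Submodule.mem_orthogonal_singleton_iff_inner_right.mp (v i).2
  refine ⟨fun v i => ?_, fun v => ?_⟩
  · rw [Submodule.coe_inner, coe_curryLeftPerp_apply]
    exact hχ.1 _ i.succ
  · rw [Submodule.coe_inner, coe_curryLeftPerp_apply, hχ.2]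
    exact det_gram_vecCons_of_orthogonal hξ _ (hperp v)

end AlternatingMap

namespace LinearMap

variable {r : ℕ}

noncomputable def curryLeftPerp (A : V →ₗ[ℝ] AlternatingMap ℝ V ℝ (Fin (r + 1))) (ξ : V) :
    (ℝ ∙ ξ)ᗮ →ₗ[ℝ] AlternatingMap ℝ (ℝ ∙ ξ)ᗮ ℝ (Fin r) where
  toFun η := ((A η).curryLeft ξ).compLinearMap (ℝ ∙ ξ)ᗮ.subtype
  map_add' _ _ := by ext; simp
  map_smul' _ _ := by ext; simp

theorem curryLeftPerp_apply_three (A : V →ₗ[ℝ] AlternatingMap ℝ V ℝ (Fin 4)) (ξ : V)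
    (η₁ η₂ η₃ η₄ : (ℝ ∙ ξ)ᗮ) :
    A.curryLeftPerp ξ η₁ ![η₂, η₃, η₄] = A η₁ ![ξ, η₂, η₃, η₄] := by
  change A η₁ (Matrix.vecCons ξ ((↑) ∘ ![η₂, η₃, η₄])) = _
  rw [← FinVec.map_eq]; rfl

end LinearMap

theorem coe_hermExt_curryLeftPerp {χ : AlternatingMap ℝ V V (Fin 3)}
    (hχ : ∀ v i, ⟪χ v, v i⟫ = 0) (ξ : V) (v : (ℝ ∙ ξ)ᗮ) (w : Fin 3 → (ℝ ∙ ξ)ᗮ) (k : Fin 6) :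
    ((hermExt (χ.curryLeftPerp hχ ξ) v w k : (ℝ ∙ ξ)ᗮ) : V) =
      hermExt8 χ ξ v (fun i => w i) k := by
  refine Fin.addCases (m := 3) (n := 3) (fun i => ?_) (fun i => ?_) k
  · simp only [hermExt, hermExt8, Fin.append_left]
  · simp only [hermExt, hermExt8, Fin.append_right, AlternatingMap.coe_curryLeftPerp_apply_two]

theorem SecondCR8.curryLeftPerp {χ : AlternatingMap ℝ V V (Fin 3)}
    (hχ : ∀ v i, ⟪χ v, v i⟫ = 0) {ξ : V} (hξ : ‖ξ‖ = 1)
    {A : V →ₗ[ℝ] AlternatingMap ℝ V ℝ (Fin 4)} (hA : SecondCR8 χ A) :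
    SecondCR7 (χ.curryLeftPerp hχ ξ) (A.curryLeftPerp ξ) := by
  intro v hv w hw hwv hherm j p q
  have hperp (x : (ℝ ∙ ξ)ᗮ) : ⟪(x : V), ξ⟫ = 0 :=
    Submodule.inner_left_of_mem_orthogonal (Submodule.mem_span_singleton_self ξ) x.2
  have hw' : Orthonormal ℝ (fun i => (w i : V)) := hw.comp_linearIsometry (ℝ ∙ ξ)ᗮ.subtypeₗᵢ
  have hherm' (i k : Fin 3) : ⟪(w i : V), χ ![ξ, v, w k]⟫ = 0 := by
    simpa only [Submodule.coe_inner, AlternatingMap.coe_curryLeftPerp_apply_two] using hherm i k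
  simpa only [LinearMap.curryLeftPerp_apply_three, AlternatingMap.coe_curryLeftPerp_apply_two,
    coe_hermExt_curryLeftPerp] using
    hA ξ v hξ (by rwa [Submodule.norm_coe]) (real_inner_comm ξ v ▸ hperp v) _ hw'
      (fun i => hperp (w i)) hwv hherm' j p q

theorem restriction_of_W_torsion_general {V : Type*} [NormedAddCommGroup V]
    [InnerProductSpace ℝ V] (h8 : Module.finrank ℝ V = 8)
    (χ : AlternatingMap ℝ V V (Fin 3)) (hχ : IsVCP χ)
    (ξ : V) (hξ : ‖ξ‖ = 1)
    (A : V →ₗ[ℝ] AlternatingMap ℝ V ℝ (Fin 4))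
    (hA : ∀ η₁ η₂ η₃ η₄ : V, A η₁ ![η₂, η₃, η₄, χ ![η₂, η₃, η₄]] = 0) :
    Module.finrank ℝ ↥((Submodule.span ℝ {ξ})ᗮ) = 7 ∧
    ∃ σ : AlternatingMap ℝ ↥((Submodule.span ℝ {ξ})ᗮ) ↥((Submodule.span ℝ {ξ})ᗮ) (Fin 2),
      (∀ x y : ↥((Submodule.span ℝ {ξ})ᗮ), (σ ![x, y] : V) = χ ![ξ, ↑x, ↑y]) ∧
      IsVCP σ ∧
      ∃ B : ↥((Submodule.span ℝ {ξ})ᗮ) →ₗ[ℝ]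
          AlternatingMap ℝ ↥((Submodule.span ℝ {ξ})ᗮ) ℝ (Fin 3),
        (∀ η₁ η₂ η₃ η₄ : ↥((Submodule.span ℝ {ξ})ᗮ),
          B η₁ ![η₂, η₃, η₄] = A ↑η₁ ![ξ, ↑η₂, ↑η₃, ↑η₄]) ∧
        (∀ η₁ η₂ η₃ : ↥((Submodule.span ℝ {ξ})ᗮ), B η₁ ![η₂, η₃, σ ![η₂, η₃]] = 0) ∧
        (SecondCR8 χ A → SecondCR7 σ B) := by
  have : Fact (Module.finrank ℝ V = 7 + 1) := ⟨h8⟩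
  have hξ0 : ξ ≠ 0 := norm_ne_zero_iff.mp (hξ ▸ one_ne_zero)
  refine ⟨Submodule.finrank_orthogonal_span_singleton hξ0, χ.curryLeftPerp hχ.1 ξ,
    AlternatingMap.coe_curryLeftPerp_apply_two hχ.1 ξ, AlternatingMap.isVCP_curryLeftPerp hχ hξ,
    A.curryLeftPerp ξ, LinearMap.curryLeftPerp_apply_three A ξ, fun η₁ η₂ η₃ => ?_,
    SecondCR8.curryLeftPerp hχ.1 hξ⟩
  rw [LinearMap.curryLeftPerp_apply_three, AlternatingMap.coe_curryLeftPerp_apply_two]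
  exact hA η₁ ξ η₂ η₃

/-- Reduction from dimension 8 to dimension 7 for the second CR-integrability
condition. Let `ξ` be a unit vector in an 8-dimensional `(V,χ)` and `W = ξᗮ`.
Then: (a) `W` is 7-dimensional and the restriction `χ_ξ(x,y) = χ(ξ,x,y)` defines a
2-fold VCP `σ` on `W`; (b) for `A ∈ 𝒲(V)`, the restriction
`B(η₁; η₂,η₃,η₄) = A(η₁; ξ,η₂,η₃,η₄)` is an algebraic intrinsic torsion on `(W,σ)`;
(c) if `A` satisfies the second CR-integrability condition on `(V,χ)`, then `B`
satisfies the second CR-integrability condition on `(W,σ)`. -/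
theorem restriction_of_W_torsion {V : Type*} [NormedAddCommGroup V]
    [InnerProductSpace ℝ V] [FiniteDimensional ℝ V] (h8 : Module.finrank ℝ V = 8)
    (χ : AlternatingMap ℝ V V (Fin 3)) (hχ : IsVCP χ)
    (ξ : V) (hξ : ‖ξ‖ = 1)
    (A : V →ₗ[ℝ] AlternatingMap ℝ V ℝ (Fin 4))
    (hA : ∀ η₁ η₂ η₃ η₄ : V, A η₁ ![η₂, η₃, η₄, χ ![η₂, η₃, η₄]] = 0) :
    Module.finrank ℝ ↥((Submodule.span ℝ {ξ})ᗮ) = 7 ∧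
    ∃ σ : AlternatingMap ℝ ↥((Submodule.span ℝ {ξ})ᗮ) ↥((Submodule.span ℝ {ξ})ᗮ) (Fin 2),
      (∀ x y : ↥((Submodule.span ℝ {ξ})ᗮ), (σ ![x, y] : V) = χ ![ξ, ↑x, ↑y]) ∧
      IsVCP σ ∧
      ∃ B : ↥((Submodule.span ℝ {ξ})ᗮ) →ₗ[ℝ]
          AlternatingMap ℝ ↥((Submodule.span ℝ {ξ})ᗮ) ℝ (Fin 3),
        (∀ η₁ η₂ η₃ η₄ : ↥((Submodule.span ℝ {ξ})ᗮ),
          B η₁ ![η₂, η₃, η₄] = A ↑η₁ ![ξ, ↑η₂, ↑η₃, ↑η₄]) ∧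
        (∀ η₁ η₂ η₃ : ↥((Submodule.span ℝ {ξ})ᗮ), B η₁ ![η₂, η₃, σ ![η₂, η₃]] = 0) ∧
        (SecondCR8 χ A → SecondCR7 σ B) :=
  restriction_of_W_torsion_general h8 χ hχ ξ hξ A hA
end
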